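/- arXiv:1309.3327 — 6 statements merged into one kernel-verified Lean document; each statement's English description precedes it below -/
import Mathlib

section
/- For the SIR model with information-dependent contact rate S' = μ(1−S) − β(M)IS, I' = β(M)IS − (μ+ν)I, where β is positive and the information index M(t) is any nonnegative quantity with β(M) ≤ β(0), if the basic reproduction number R₀ = β(0)/(μ+ν) satisfies R₀ ≤ 1 and 0 ≤ I(0), 0 ≤ S(0), S(0)+I(0) ≤ 1, then I(t) → 0 and S(t) → 1 as t → ∞, i.e. the disease-free state is globally asymptotically stable. -/
/-!
Everything rests on one comparison principle: a function that starts nonpositive and satisfies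
`f' ≤ K f` wherever it is positive stays nonpositive. It shows first that the triangle
`S, I ≥ 0, S + I ≤ 1` is invariant. On the triangle `β(M) ≤ β(0) ≤ μ + ν` gives
`I' ≤ β(0) I (1 - I) - (μ + ν) I ≤ -β(0) I²`, so `I` lies below the solution `I(0) / (1 + β(0) I(0) t)`
of the logistic equation `u' = -β(0) u²` and tends to `0`. Then `(1 - S)' ≤ -μ (1 - S) + β(0) I`
with a forcing term tending to `0`, which drives `1 - S` to `0`.
-/

open Filter Topology Set Real

theorem nonpos_of_hasDerivAt_le_mul {f f' : ℝ → ℝ} {a b K : ℝ}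
    (hf : ∀ t ∈ Icc a b, HasDerivAt f (f' t) t) (ha : f a ≤ 0)
    (bound : ∀ t ∈ Ico a b, 0 < f t → f' t ≤ K * f t) :
    ∀ t ∈ Icc a b, f t ≤ 0 := by
  intro t ht
  refine le_of_forall_pos_le_add fun δ hδ => ?_
  -- `δ e^{(K+1)(s-t)}` is a fence: where `f` touches it, `f` grows strictly slower.
  set B : ℝ → ℝ := fun s => δ * exp ((K + 1) * (s - t))
  have hB : ∀ s, HasDerivAt B ((K + 1) * B s) s := fun s =>
    ((((hasDerivAt_id s).sub_const t).const_mul (K + 1)).exp.const_mul δ).congr_deriv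
      (by simp only [B, id]; ring)
  have hfB : ∀ s ∈ Icc a b, f s ≤ B s := by
    refine image_le_of_deriv_right_lt_deriv_boundary
      (fun s hs => (hf s hs).continuousAt.continuousWithinAt)
      (fun s hs => (hf s (Ico_subset_Icc_self hs)).hasDerivWithinAt)
      (ha.trans (by positivity)) hB fun s hs hfs => ?_
    have hpos : 0 < f s := hfs ▸ by positivity
    calc f' s ≤ K * f s := bound s hs hpos
      _ < (K + 1) * B s := by rw [← hfs]; linarith
  simpa [B] using hfB t ht

theorem le_div_one_add_mul_of_hasDerivAt_le_neg_mul_sq {f f' : ℝ → ℝ} {c : ℝ} (hc : 0 ≤ c)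
    (hf : ∀ t, 0 ≤ t → HasDerivAt f (f' t) t) (hf' : ∀ t, 0 ≤ t → f' t ≤ -c * f t ^ 2)
    (hf0 : 0 ≤ f 0) : ∀ t, 0 ≤ t → f t ≤ f 0 / (1 + c * f 0 * t) := by
  intro t ht
  set u : ℝ → ℝ := fun s => f 0 / (1 + c * f 0 * s)
  have hden : ∀ s, 0 ≤ s → 0 < 1 + c * f 0 * s := fun s hs => by positivity
  have hu : ∀ s, 0 ≤ s → HasDerivAt u (-c * u s ^ 2) s := fun s hs =>
    ((hasDerivAt_const s (f 0)).div (((hasDerivAt_id s).const_mul (c * f 0)).const_add 1)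
      (hden s hs).ne').congr_deriv (by simp only [u, id]; field_simp; ring)
  have hfu := nonpos_of_hasDerivAt_le_mul (f := fun s => f s - u s) (K := 0)
    (fun s hs => (hf s hs.1).sub (hu s hs.1)) (by simp [u]) (fun s hs hpos => ?_) t ⟨ht, le_rfl⟩
  · linarith
  · have hu0 : 0 ≤ u s := div_nonneg hf0 (hden s hs.1).le
    have hprod : 0 ≤ c * (f s - u s) * (f s + u s) :=
      mul_nonneg (mul_nonneg hc hpos.le) (by linarith [show 0 < f s - u s from hpos])
    nlinarith [hf' s hs.1]

theorem tendsto_zero_of_hasDerivAt_le_neg_mul_sq {f f' : ℝ → ℝ} {c : ℝ} (hc : 0 < c)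
    (hf : ∀ t, 0 ≤ t → HasDerivAt f (f' t) t) (hf' : ∀ t, 0 ≤ t → f' t ≤ -c * f t ^ 2)
    (hnn : ∀ t, 0 ≤ t → 0 ≤ f t) : Tendsto f atTop (𝓝 0) := by
  have hbound : ∀ t, 0 < t → f t ≤ 1 / (c * t) := fun t ht => by
    have hf0 := hnn 0 le_rfl
    refine (le_div_one_add_mul_of_hasDerivAt_le_neg_mul_sq hc.le hf hf' hf0 t ht.le).trans ?_
    rw [div_le_div_iff₀ (by positivity) (by positivity)]
    linarith
  have hlim : Tendsto (fun t => 1 / (c * t)) atTop (𝓝 0) := by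
    simpa [Function.comp_def] using tendsto_inv_atTop_zero.comp (tendsto_id.const_mul_atTop hc)
  refine tendsto_of_tendsto_of_tendsto_of_le_of_le' tendsto_const_nhds hlim ?_ ?_
  · filter_upwards [eventually_ge_atTop 0] with t ht using hnn t ht
  · filter_upwards [eventually_gt_atTop 0] with t ht using hbound t ht

theorem tendsto_zero_of_hasDerivAt_le_neg_mul_add {f f' g : ℝ → ℝ} {μ : ℝ} (hμ : 0 < μ)
    (hf : ∀ t, 0 ≤ t → HasDerivAt f (f' t) t) (hf' : ∀ t, 0 ≤ t → f' t ≤ -μ * f t + g t)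
    (hg : Tendsto g atTop (𝓝 0)) (hnn : ∀ t, 0 ≤ t → 0 ≤ f t) : Tendsto f atTop (𝓝 0) := by
  refine tendsto_order.2 ⟨fun a ha => ?_, fun ε hε => ?_⟩
  · filter_upwards [eventually_ge_atTop 0] with t ht using ha.trans_le (hnn t ht)
  obtain ⟨T₀, hT₀⟩ := eventually_atTop.1 (hg.eventually_lt_const (by positivity : 0 < μ * ε / 2))
  set T := max T₀ 0
  have hT : 0 ≤ T := le_max_right _ _
  set E : ℝ → ℝ := fun t => f T * exp (-μ * (t - T))
  have hE : ∀ t, HasDerivAt E (-μ * E t) t := fun t =>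
    ((((hasDerivAt_id t).sub_const T).const_mul (-μ)).exp.const_mul (f T)).congr_deriv
      (by simp only [E, id]; ring)
  -- Once `g < με/2`, the function `f - ε/2 - E` can only decay.
  have hfE : ∀ t, T ≤ t → f t ≤ ε / 2 + E t := fun t ht => by
    have hcmp := nonpos_of_hasDerivAt_le_mul (f := fun s => f s - ε / 2 - E s) (K := -μ)
      (fun s hs => ((hf s (hT.trans hs.1)).sub_const _).sub (hE s)) (by simp [E]; linarith)
      (fun s hs _ => ?_) t ⟨ht, le_rfl⟩
    · linarith
    · have hs : T ≤ s := hs.1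
      linarith [hf' s (hT.trans hs), hT₀ s ((le_max_left _ _).trans hs)]
  have hE0 : Tendsto E atTop (𝓝 0) := by
    simpa [E, neg_mul, sub_eq_add_neg] using (tendsto_exp_neg_atTop_nhds_zero.comp
      ((tendsto_id.atTop_add tendsto_const_nhds).const_mul_atTop hμ)).const_mul (f T)
  filter_upwards [eventually_ge_atTop T, hE0.eventually_lt_const (half_pos hε)] with t ht hEt
  linarith [hfE t ht]

namespace InfoSIR

-- `b t` plays the role of the contact rate `β (M t)`; only the bounds `0 ≤ b t ≤ c` enter.
variable {μ ν c : ℝ} {b S I : ℝ → ℝ}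

theorem infected_nonneg (hSc : ContinuousOn S (Ici 0)) (hb0 : ∀ t, 0 ≤ t → 0 ≤ b t)
    (hbc : ∀ t, 0 ≤ t → b t ≤ c)
    (hI : ∀ t, 0 ≤ t → HasDerivAt I (b t * I t * S t - (μ + ν) * I t) t) (hI0 : 0 ≤ I 0) :
    ∀ t, 0 ≤ t → 0 ≤ I t := by
  intro t ht
  obtain ⟨C, hC⟩ := isCompact_Icc.exists_bound_of_continuousOn (hSc.mono Icc_subset_Ici_self)
  have hC0 : 0 ≤ C := (norm_nonneg _).trans (hC 0 ⟨le_rfl, ht⟩)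
  -- `-I` satisfies a linear equation whose coefficient `b S - (μ + ν)` is bounded above on `[0, t]`.
  have key := nonpos_of_hasDerivAt_le_mul (f := fun s => -I s) (K := c * C - (μ + ν))
    (fun s hs => (hI s hs.1).neg) (by simpa using hI0) (fun s hs hpos => ?_) t ⟨ht, le_rfl⟩
  · simpa using key
  · have hbS : b s * S s ≤ c * C :=
      calc b s * S s ≤ b s * |S s| := mul_le_mul_of_nonneg_left (le_abs_self _) (hb0 s hs.1)
        _ ≤ c * C := mul_le_mul (hbc s hs.1) (hC s (Ico_subset_Icc_self hs)) (abs_nonneg _)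
            ((hb0 s hs.1).trans (hbc s hs.1))
    have hpos : 0 < -I s := hpos
    nlinarith

theorem susceptible_nonneg (hμ : 0 ≤ μ) (hb0 : ∀ t, 0 ≤ t → 0 ≤ b t)
    (hS : ∀ t, 0 ≤ t → HasDerivAt S (μ * (1 - S t) - b t * I t * S t) t)
    (hInn : ∀ t, 0 ≤ t → 0 ≤ I t) (hS0 : 0 ≤ S 0) : ∀ t, 0 ≤ t → 0 ≤ S t := by
  intro t ht
  have key := nonpos_of_hasDerivAt_le_mul (f := fun s => -S s) (K := 0)
    (fun s hs => (hS s hs.1).neg) (by simpa using hS0) (fun s hs hpos => ?_) t ⟨ht, le_rfl⟩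
  · simpa using key
  · have hpos : 0 < -S s := hpos
    have hbI : 0 ≤ b s * I s := mul_nonneg (hb0 s hs.1) (hInn s hs.1)
    nlinarith

theorem susceptible_add_infected_le_one (hν : 0 ≤ ν)
    (hS : ∀ t, 0 ≤ t → HasDerivAt S (μ * (1 - S t) - b t * I t * S t) t)
    (hI : ∀ t, 0 ≤ t → HasDerivAt I (b t * I t * S t - (μ + ν) * I t) t)
    (hInn : ∀ t, 0 ≤ t → 0 ≤ I t) (hSI0 : S 0 + I 0 ≤ 1) : ∀ t, 0 ≤ t → S t + I t ≤ 1 := by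
  intro t ht
  have key := nonpos_of_hasDerivAt_le_mul (f := fun s => S s + I s - 1) (K := -μ)
    (fun s hs => ((hS s hs.1).add (hI s hs.1)).sub_const 1) (by simpa using hSI0)
    (fun s hs _ => ?_) t ⟨ht, le_rfl⟩
  · simpa using key
  · nlinarith [hInn s hs.1]

theorem tendsto_infected_zero (hc : 0 < c) (hbc : ∀ t, 0 ≤ t → b t ≤ c) (hcμν : c ≤ μ + ν)
    (hI : ∀ t, 0 ≤ t → HasDerivAt I (b t * I t * S t - (μ + ν) * I t) t)
    (hInn : ∀ t, 0 ≤ t → 0 ≤ I t) (hSnn : ∀ t, 0 ≤ t → 0 ≤ S t)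
    (hSI : ∀ t, 0 ≤ t → S t + I t ≤ 1) : Tendsto I atTop (𝓝 0) := by
  refine tendsto_zero_of_hasDerivAt_le_neg_mul_sq hc hI (fun t ht => ?_) hInn
  have hIS : I t * S t ≤ I t * (1 - I t) :=
    mul_le_mul_of_nonneg_left (by linarith [hSI t ht]) (hInn t ht)
  calc b t * I t * S t - (μ + ν) * I t ≤ c * (I t * (1 - I t)) - c * I t := by
        rw [mul_assoc]
        gcongr
        · exact mul_nonneg (hInn t ht) (hSnn t ht)
        · exact hbc t ht
        · exact hInn t ht
    _ = -c * I t ^ 2 := by ring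

theorem tendsto_susceptible_one (hμ : 0 < μ) (hb0 : ∀ t, 0 ≤ t → 0 ≤ b t) (hbc : ∀ t, 0 ≤ t → b t ≤ c)
    (hS : ∀ t, 0 ≤ t → HasDerivAt S (μ * (1 - S t) - b t * I t * S t) t)
    (hInn : ∀ t, 0 ≤ t → 0 ≤ I t)
    (hSI : ∀ t, 0 ≤ t → S t + I t ≤ 1) (hIlim : Tendsto I atTop (𝓝 0)) :
    Tendsto S atTop (𝓝 1) := by
  have h := tendsto_zero_of_hasDerivAt_le_neg_mul_add (f := fun t => 1 - S t) (g := fun t => c * I t) hμ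
    (fun t ht => (hS t ht).const_sub 1) (fun t ht => ?_) (by simpa using hIlim.const_mul c)
    (fun t ht => by linarith [hSI t ht, hInn t ht])
  · simpa using h.const_sub 1
  · have hbI : 0 ≤ b t * I t := mul_nonneg (hb0 t ht) (hInn t ht)
    nlinarith [mul_le_mul_of_nonneg_left (show S t ≤ 1 by linarith [hSI t ht, hInn t ht]) hbI,
      mul_le_mul_of_nonneg_right (hbc t ht) (hInn t ht)]

end InfoSIR

/-- For the SIR model with information-dependent contact rate,
if `R₀ = β(0)/(μ+ν) ≤ 1`, the disease-free state `(S,I) = (1,0)` is globally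
asymptotically stable. -/
theorem sir_info_dfs_gas
    (μ ν : ℝ) (hμ : 0 < μ) (hν : 0 < ν)
    (β : ℝ → ℝ) (hβpos : ∀ m, 0 ≤ m → 0 < β m)
    (hβle : ∀ m, 0 ≤ m → β m ≤ β 0)
    (S I M : ℝ → ℝ)
    (hM : ∀ t, 0 ≤ t → 0 ≤ M t)
    (hS : ∀ t, 0 ≤ t → HasDerivAt S (μ * (1 - S t) - β (M t) * I t * S t) t)
    (hI : ∀ t, 0 ≤ t → HasDerivAt I (β (M t) * I t * S t - (μ + ν) * I t) t)
    (hI0 : 0 ≤ I 0) (hS0 : 0 ≤ S 0) (hSI0 : S 0 + I 0 ≤ 1)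
    (hR0 : β 0 / (μ + ν) ≤ 1) :
    Tendsto I atTop (𝓝 0) ∧ Tendsto S atTop (𝓝 1) := by
  have hb0 : ∀ t, 0 ≤ t → 0 ≤ β (M t) := fun t ht => (hβpos _ (hM t ht)).le
  have hbc : ∀ t, 0 ≤ t → β (M t) ≤ β 0 := fun t ht => hβle _ (hM t ht)
  have hcμν : β 0 ≤ μ + ν := (div_le_one (by positivity)).1 hR0
  have hSc : ContinuousOn S (Ici 0) := fun t ht => (hS t ht).continuousAt.continuousWithinAt
  have hInn := InfoSIR.infected_nonneg hSc hb0 hbc hI hI0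
  have hSnn := InfoSIR.susceptible_nonneg hμ.le hb0 hS hInn hS0
  have hSI := InfoSIR.susceptible_add_infected_le_one hν.le hS hI hInn hSI0
  have hIlim := InfoSIR.tendsto_infected_zero (hβpos 0 le_rfl) hbc hcμν hI hInn hSnn hSI
  exact ⟨hIlim, InfoSIR.tendsto_susceptible_one hμ hb0 hbc hS hInn hSI hIlim⟩
end

section
/- Suppose β : [0,∞) → (0,∞) is continuously differentiable with β' < 0, and g : [0,1] → [0,∞) is continuously differentiable with g(0)=0 and g' > 0. If R₀ = β(0)/(μ+ν) > 1, then the equation μ(1 − (μ+ν)/β(g(I))) − (μ+ν)I = 0 has a unique solution I_e in (0,1), determining a unique endemic equilibrium (S_e, I_e) with S_e = (μ+ν)/β(g(I_e)). -/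
/-!
Write `c = μ + ν` and `F(I) = μ (1 - c / β(g I)) - c I`. A function whose derivative never vanishes
is differentiable, so `g` is continuous and strictly increasing on `[0,1]`, and `β` is continuous and
strictly decreasing on `[0,∞)`. Hence `β ∘ g` is positive, continuous and decreasing on `[0,1]`, and
`F` is continuous and strictly decreasing there. Since `F 0 = μ (1 - 1/R₀) > 0` and
`F 1 = -ν - μ c / β(g 1) < 0`, the intermediate value theorem gives a zero in `(0,1)`, and strict
monotonicity makes it unique.
-/

open Set

lemma strictMonoOn_of_forall_deriv_pos {D : Set ℝ} (hD : Convex ℝ D) {f : ℝ → ℝ}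
    (hf' : ∀ x ∈ D, 0 < deriv f x) : StrictMonoOn f D :=
  strictMonoOn_of_deriv_pos hD
    (fun x hx => (differentiableAt_of_deriv_ne_zero (hf' x hx).ne').continuousAt.continuousWithinAt)
    fun x hx => hf' x (interior_subset hx)

lemma strictAntiOn_of_forall_deriv_neg {D : Set ℝ} (hD : Convex ℝ D) {f : ℝ → ℝ}
    (hf' : ∀ x ∈ D, deriv f x < 0) : StrictAntiOn f D :=
  strictAntiOn_of_deriv_neg hD
    (fun x hx => (differentiableAt_of_deriv_ne_zero (hf' x hx).ne).continuousAt.continuousWithinAt)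
    fun x hx => hf' x (interior_subset hx)

lemma existsUnique_mem_Ioo_eq_zero_of_strictAntiOn {f : ℝ → ℝ} {a b : ℝ} (hab : a ≤ b)
    (hf : ContinuousOn f (Icc a b)) (hf_anti : StrictAntiOn f (Icc a b))
    (ha : 0 < f a) (hb : f b < 0) : ∃! x, x ∈ Ioo a b ∧ f x = 0 := by
  obtain ⟨x, hx, hfx⟩ := intermediate_value_Ioo' hab hf ⟨hb, ha⟩
  refine ⟨x, ⟨hx, hfx⟩, fun y ⟨hy, hfy⟩ => ?_⟩
  exact hf_anti.injOn (Ioo_subset_Icc_self hy) (Ioo_subset_Icc_self hx) (hfy.trans hfx.symm)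

section Balance

variable {s : Set ℝ} {h : ℝ → ℝ} {μ c : ℝ}

lemma strictAntiOn_balance (hμ : 0 ≤ μ) (hc : 0 < c) (hpos : ∀ x ∈ s, 0 < h x)
    (h_anti : AntitoneOn h s) : StrictAntiOn (fun I => μ * (1 - c / h I) - c * I) s := by
  intro x hx y hy hxy
  have hdiv : c / h x ≤ c / h y :=
    div_le_div_of_nonneg_left hc.le (hpos y hy) (h_anti hx hy hxy.le)
  have hlin : c * x < c * y := mul_lt_mul_of_pos_left hxy hc
  dsimp only
  nlinarith

lemma continuousOn_balance (hpos : ∀ x ∈ s, 0 < h x) (hh : ContinuousOn h s) :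
    ContinuousOn (fun I => μ * (1 - c / h I) - c * I) s :=
  (continuousOn_const.mul (continuousOn_const.sub
    (continuousOn_const.div hh fun x hx => (hpos x hx).ne'))).sub
    (continuousOn_const.mul continuousOn_id)

end Balance

theorem endemic_equilibrium_exists_unique_general
    (μ ν : ℝ) (hμ : 0 < μ) (hν : 0 < ν)
    (β g : ℝ → ℝ)
    (hβpos : ∀ m, 0 ≤ m → 0 < β m)
    (hβ' : ∀ m, 0 ≤ m → deriv β m < 0)
    (hg0 : g 0 = 0)
    (hg' : ∀ i, i ∈ Set.Icc (0:ℝ) 1 → 0 < deriv g i)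
    (hR0 : 1 < β 0 / (μ + ν)) :
    ∃! Ie : ℝ, Ie ∈ Set.Ioo (0:ℝ) 1 ∧
      μ * (1 - (μ + ν) / β (g Ie)) - (μ + ν) * Ie = 0 := by
  have hc : 0 < μ + ν := by linarith
  have hg_mono : StrictMonoOn g (Icc 0 1) := strictMonoOn_of_forall_deriv_pos (convex_Icc 0 1) hg'
  have hg_nonneg : ∀ I ∈ Icc (0:ℝ) 1, 0 ≤ g I := fun I hI =>
    hg0 ▸ hg_mono.monotoneOn (left_mem_Icc.2 zero_le_one) hI hI.1
  have hβ_anti : StrictAntiOn β (Ici 0) := strictAntiOn_of_forall_deriv_neg (convex_Ici 0) hβ'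
  have hβg_pos : ∀ I ∈ Icc (0:ℝ) 1, 0 < β (g I) := fun I hI => hβpos _ (hg_nonneg I hI)
  have hβg_anti : AntitoneOn (fun I => β (g I)) (Icc 0 1) :=
    hβ_anti.antitoneOn.comp_MonotoneOn hg_mono.monotoneOn hg_nonneg
  have hβg_cont : ContinuousOn (fun I => β (g I)) (Icc 0 1) := fun I hI =>
    ((differentiableAt_of_deriv_ne_zero (hβ' _ (hg_nonneg I hI)).ne).comp I
      (differentiableAt_of_deriv_ne_zero (hg' I hI).ne')).continuousAt.continuousWithinAt
  refine existsUnique_mem_Ioo_eq_zero_of_strictAntiOn zero_le_one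
    (continuousOn_balance hβg_pos hβg_cont) (strictAntiOn_balance hμ.le hc hβg_pos hβg_anti) ?_ ?_
  · have hβ0 : 0 < β 0 := hβpos 0 le_rfl
    have : (μ + ν) / β 0 < 1 := (div_lt_one hβ0).2 (by simpa using (lt_div_iff₀ hc).1 hR0)
    simp only [hg0, mul_zero, sub_zero]
    exact mul_pos hμ (sub_pos.2 this)
  · have : 0 < (μ + ν) / β (g 1) := div_pos hc (hβg_pos 1 (right_mem_Icc.2 zero_le_one))
    nlinarith

/-- If `R₀ = β(0)/(μ+ν) > 1`, the endemic equilibrium equation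
`μ(1 − (μ+ν)/β(g(I))) − (μ+ν)I = 0` has a unique solution `I_e ∈ (0,1)`,
and the endemic equilibrium is `(S_e, I_e)` with `S_e = (μ+ν)/β(g(I_e))`. -/
theorem endemic_equilibrium_exists_unique
    (μ ν : ℝ) (hμ : 0 < μ) (hν : 0 < ν)
    (β g : ℝ → ℝ)
    (hβC1 : ContDiff ℝ 1 β) (hgC1 : ContDiff ℝ 1 g)
    (hβpos : ∀ m, 0 ≤ m → 0 < β m)
    (hβ' : ∀ m, 0 ≤ m → deriv β m < 0)
    (hg0 : g 0 = 0) (hgpos : ∀ i, 0 ≤ i → 0 ≤ g i)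
    (hg' : ∀ i, i ∈ Set.Icc (0:ℝ) 1 → 0 < deriv g i)
    (hR0 : 1 < β 0 / (μ + ν)) :
    ∃! Ie : ℝ, Ie ∈ Set.Ioo (0:ℝ) 1 ∧
      μ * (1 - (μ + ν) / β (g Ie)) - (μ + ν) * Ie = 0 :=
  endemic_equilibrium_exists_unique_general μ ν hμ hν β g hβpos hβ' hg0 hg' hR0
end

section
/- For the planar undelayed system S' = μ(1−S) − β(g(I))IS, I' = β(g(I))IS − (μ+ν)I on the region {S > 0, I > 0}, the Dulac function B(S,I) = 1/I gives div(B·(S',I')) = −μ/I − β(g(I)) + S g'(I) β'(g(I)) (evaluated pointwise), which is strictly negative whenever β > 0, β' < 0, g' > 0, S > 0, I > 0; hence by the Bendixson–Dulac criterion the system has no periodic orbits in the open first quadrant. -/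
/-!
Along a solution in the open quadrant, `z = log I` satisfies `z' = v` with
`v = β(g I) S - (μ + ν)`, and `v` obeys a damped Liénard equation `v' = a v + F(z)` with
`a = β'(g I) g'(I) I S - μ - I β(g I) < 0`; the damping is the Dulac divergence of `B = 1/I`
multiplied by `I`. Hence the energy `v² / 2 - ∫₀^z F` has derivative `a v² ≤ 0`. A periodic
orbit makes the energy periodic, hence constant, so `v ≡ 0`, which forces `I` and then `S`
to be constant.
-/

open Function Real

theorem Antitone.eq_of_periodic {f : ℝ → ℝ} {c : ℝ} (hf : Antitone f) (hp : Periodic f c)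
    (hc : 0 < c) (x y : ℝ) : f x = f y := by
  wlog hxy : x ≤ y generalizing x y
  · exact (this y x (le_of_not_ge hxy)).symm
  obtain ⟨n, hn⟩ := exists_nat_ge ((y - x) / c)
  have hy : y ≤ x + n * c := by linarith [(div_le_iff₀ hc).mp hn]
  refine le_antisymm ?_ (hf hxy)
  calc f x = f (x + n * c) := (hp.nat_mul n x).symm
    _ ≤ f y := hf hy

theorem damped_lienard_velocity_eq_zero_of_periodic {z v a F : ℝ → ℝ} {T : ℝ} (hT : 0 < T)
    (hF : Continuous F) (hz : ∀ t, HasDerivAt z (v t) t)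
    (hv : ∀ t, HasDerivAt v (a t * v t + F (z t)) t) (ha : ∀ t, a t < 0)
    (hzT : Periodic z T) (hvT : Periodic v T) (t : ℝ) : v t = 0 := by
  set G : ℝ → ℝ := fun x => ∫ u in (0 : ℝ)..x, F u
  set E : ℝ → ℝ := fun t => v t ^ 2 / 2 - G (z t)
  have hE : ∀ t, HasDerivAt E (a t * v t ^ 2) t := by
    intro t
    have hv2 : HasDerivAt (fun t => v t ^ 2 / 2) (v t * (a t * v t + F (z t))) t :=
      (((hv t).pow 2).div_const 2).congr_deriv (by ring)
    have hG : HasDerivAt (fun t => G (z t)) (F (z t) * v t) t :=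
      (hF.integral_hasStrictDerivAt 0 (z t)).hasDerivAt.comp t (hz t)
    exact (hv2.sub hG).congr_deriv (by ring)
  have hE_anti : Antitone E := antitone_of_hasDerivAt_nonpos hE fun t =>
    mul_nonpos_of_nonpos_of_nonneg (ha t).le (sq_nonneg _)
  have hET : Periodic E T := fun t => by simp only [E, hzT t, hvT t]
  have hE_const : E = fun _ => E 0 := funext fun s => hE_anti.eq_of_periodic hET hT s 0
  have h0 : a t * v t ^ 2 = 0 := (hE t).unique (hE_const ▸ hasDerivAt_const t (E 0))
  simpa [(ha t).ne] using h0

section SIR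

variable {μ ν : ℝ} {β g : ℝ → ℝ}

theorem sir_dulac_divergence_eq {I : ℝ} (hβ : DifferentiableAt ℝ β (g I)) (hg : DifferentiableAt ℝ g I)
    (hI : I ≠ 0) (S : ℝ) :
    deriv (fun s => (μ * (1 - s) - β (g I) * I * s) / I) S +
      deriv (fun i => β (g i) * S - (μ + ν)) I =
      -μ / I - β (g I) + S * deriv g I * deriv β (g I) := by
  have hdS : HasDerivAt (fun s => (μ * (1 - s) - β (g I) * I * s) / I)
      ((μ * -1 - β (g I) * I * 1) / I) S :=
    ((((hasDerivAt_id S).const_sub 1).const_mul μ).sub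
      ((hasDerivAt_id S).const_mul (β (g I) * I))).div_const I
  have hdI : HasDerivAt (fun i => β (g i) * S - (μ + ν)) (deriv β (g I) * deriv g I * S) I :=
    ((hβ.hasDerivAt.comp I hg.hasDerivAt).mul_const S).sub_const (μ + ν)
  rw [hdS.deriv, hdI.deriv]
  field_simp

theorem sir_dulac_divergence_neg {S I : ℝ} (hμ : 0 ≤ μ) (hβ : 0 < β (g I)) (hβ' : deriv β (g I) < 0)
    (hg' : 0 < deriv g I) (hS : 0 < S) (hI : 0 < I) :
    -μ / I - β (g I) + S * deriv g I * deriv β (g I) < 0 := by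
  have h1 : 0 ≤ μ / I := div_nonneg hμ hI.le
  have h2 : S * deriv g I * deriv β (g I) < 0 := mul_neg_of_pos_of_neg (mul_pos hS hg') hβ'
  rw [neg_div]
  linarith

-- The force `F` of the Liénard equation, in the coordinate `z = log I`.
noncomputable def sirForce (μ ν : ℝ) (β g : ℝ → ℝ) (z : ℝ) : ℝ :=
  β (g (exp z)) * (μ - (μ + ν) * exp z) - μ * (μ + ν)

variable {S I : ℝ → ℝ}

theorem sir_hasDerivAt_log_infected (hIpos : ∀ t, 0 < I t)
    (hI : ∀ t, HasDerivAt I (β (g (I t)) * I t * S t - (μ + ν) * I t) t) (t : ℝ) :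
    HasDerivAt (fun t => log (I t)) (β (g (I t)) * S t - (μ + ν)) t := by
  refine ((hI t).log (hIpos t).ne').congr_deriv ?_
  field_simp [(hIpos t).ne']

theorem sir_hasDerivAt_growth_rate (hβd : Differentiable ℝ β) (hgd : Differentiable ℝ g)
    (hIpos : ∀ t, 0 < I t)
    (hS : ∀ t, HasDerivAt S (μ * (1 - S t) - β (g (I t)) * I t * S t) t)
    (hI : ∀ t, HasDerivAt I (β (g (I t)) * I t * S t - (μ + ν) * I t) t) (t : ℝ) :
    HasDerivAt (fun t => β (g (I t)) * S t - (μ + ν))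
      ((deriv β (g (I t)) * deriv g (I t) * I t * S t - μ - I t * β (g (I t))) *
          (β (g (I t)) * S t - (μ + ν)) +
        sirForce μ ν β g (log (I t))) t := by
  have hβgI := (hβd (g (I t))).hasDerivAt.comp t ((hgd (I t)).hasDerivAt.comp t (hI t))
  refine ((hβgI.mul (hS t)).sub_const (μ + ν)).congr_deriv ?_
  simp only [sirForce, exp_log (hIpos t), comp_apply]
  ring

theorem sir_growth_rate_eq_zero_of_periodic (hμ : 0 ≤ μ) (hβd : Differentiable ℝ β)
    (hgd : Differentiable ℝ g) (hβpos : ∀ m, 0 < β m) (hβ' : ∀ m, deriv β m < 0)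
    (hg' : ∀ i, 0 < deriv g i) {T : ℝ} (hT : 0 < T) (hSpos : ∀ t, 0 < S t)
    (hIpos : ∀ t, 0 < I t)
    (hS : ∀ t, HasDerivAt S (μ * (1 - S t) - β (g (I t)) * I t * S t) t)
    (hI : ∀ t, HasDerivAt I (β (g (I t)) * I t * S t - (μ + ν) * I t) t)
    (hST : Periodic S T) (hIT : Periodic I T) (t : ℝ) :
    β (g (I t)) * S t - (μ + ν) = 0 := by
  have hF : Continuous (sirForce μ ν β g) := by
    have := hβd.continuous
    have := hgd.continuous
    unfold sirForce
    fun_prop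
  refine damped_lienard_velocity_eq_zero_of_periodic hT hF
    (sir_hasDerivAt_log_infected hIpos hI) (sir_hasDerivAt_growth_rate hβd hgd hIpos hS hI)
    (fun t => ?_) (fun t => by simp only [hIT t]) (fun t => by simp only [hIT t, hST t]) t
  have h1 : deriv β (g (I t)) * deriv g (I t) * I t * S t < 0 :=
    mul_neg_of_neg_of_pos (mul_neg_of_neg_of_pos
      (mul_neg_of_neg_of_pos (hβ' _) (hg' _)) (hIpos t)) (hSpos t)
  linarith [mul_pos (hIpos t) (hβpos (g (I t)))]

end SIR

theorem dulac_no_periodic_orbits_general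
    (μ ν : ℝ) (hμ : 0 < μ)
    (β g : ℝ → ℝ)
    (hβpos : ∀ m, 0 < β m) (hβ' : ∀ m, deriv β m < 0)
    (hg' : ∀ i, 0 < deriv g i) :
    (∀ S I : ℝ, 0 < S → 0 < I →
      deriv (fun s => (μ * (1 - s) - β (g I) * I * s) / I) S +
        deriv (fun i => β (g i) * S - (μ + ν)) I =
        -μ / I - β (g I) + S * deriv g I * deriv β (g I) ∧
      -μ / I - β (g I) + S * deriv g I * deriv β (g I) < 0) ∧
    (∀ (S I : ℝ → ℝ) (T : ℝ), 0 < T →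
      (∀ t, 0 < S t) → (∀ t, 0 < I t) →
      (∀ t, HasDerivAt S (μ * (1 - S t) - β (g (I t)) * I t * S t) t) →
      (∀ t, HasDerivAt I (β (g (I t)) * I t * S t - (μ + ν) * I t) t) →
      (∀ t, S (t + T) = S t) → (∀ t, I (t + T) = I t) →
      (∀ t t' : ℝ, S t = S t' ∧ I t = I t')) := by
  have hβd : Differentiable ℝ β := fun m => differentiableAt_of_deriv_ne_zero (hβ' m).ne
  have hgd : Differentiable ℝ g := fun i => differentiableAt_of_deriv_ne_zero (hg' i).ne'
  refine ⟨fun S I hS hI => ⟨sir_dulac_divergence_eq (hβd _) (hgd _) hI.ne' S,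
    sir_dulac_divergence_neg hμ.le (hβpos _) (hβ' _) (hg' _) hS hI⟩, ?_⟩
  intro S I T hT hSpos hIpos hS hI hST hIT
  have hrate := sir_growth_rate_eq_zero_of_periodic hμ.le hβd hgd hβpos hβ' hg' hT hSpos hIpos
    hS hI hST hIT
  have hI_const : ∀ t t', I t = I t' :=
    is_const_of_deriv_eq_zero (fun t => (hI t).differentiableAt) fun t => by
      rw [(hI t).deriv]
      linear_combination I t * hrate t
  intro t t'
  have hrate' := hrate t'
  rw [← hI_const t t'] at hrate'
  have hβS : β (g (I t)) * S t = β (g (I t)) * S t' := by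
    linear_combination hrate t - hrate'
  exact ⟨mul_left_cancel₀ (hβpos _).ne' hβS, hI_const t t'⟩

/-- For the planar undelayed system, the Dulac function `B = 1/I`
gives divergence `−μ/I − β(g I) + S g'(I) β'(g I) < 0` on `{S > 0, I > 0}`,
hence (Bendixson–Dulac) the system has no nonconstant periodic orbits in the
open first quadrant. -/
theorem dulac_no_periodic_orbits
    (μ ν : ℝ) (hμ : 0 < μ) (hν : 0 < ν)
    (β g : ℝ → ℝ)
    (hβC1 : ContDiff ℝ 1 β) (hgC1 : ContDiff ℝ 1 g)
    (hβpos : ∀ m, 0 < β m) (hβ' : ∀ m, deriv β m < 0)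
    (hg' : ∀ i, 0 < deriv g i) :
    (∀ S I : ℝ, 0 < S → 0 < I →
      deriv (fun s => (μ * (1 - s) - β (g I) * I * s) / I) S +
        deriv (fun i => β (g i) * S - (μ + ν)) I =
        -μ / I - β (g I) + S * deriv g I * deriv β (g I) ∧
      -μ / I - β (g I) + S * deriv g I * deriv β (g I) < 0) ∧
    (∀ (S I : ℝ → ℝ) (T : ℝ), 0 < T →
      (∀ t, 0 < S t) → (∀ t, 0 < I t) →
      (∀ t, HasDerivAt S (μ * (1 - S t) - β (g (I t)) * I t * S t) t) →
      (∀ t, HasDerivAt I (β (g (I t)) * I t * S t - (μ + ν) * I t) t) →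
      (∀ t, S (t + T) = S t) → (∀ t, I (t + T) = I t) →
      (∀ t t' : ℝ, S t = S t' ∧ I t = I t')) :=
  dulac_no_periodic_orbits_general μ ν hμ β g hβpos hβ' hg'
end

section
/- Let P(a) = A·a² + B·a + C where A = μ + I_eβ_e − I_e(μ+ν)g'(I_e)β'_e/β_e, B = (μ + I_eβ_e)² − I_e²(μ+ν)g'(I_e)β'_e, and C = I_e²(μ+ν)β_e² + I_e μ(μ+ν)β_e. If μ, ν, I_e, β_e, g'(I_e) > 0 and β'_e < 0, then A, B, C > 0 and hence P(a) > 0 for all a > 0. Consequently the Routh–Hurwitz condition c₁c₂ > c₀ holds for the exponentially-fading-kernel model, and the endemic equilibrium is locally asymptotically stable for every a > 0. -/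
/-! Since `β'_e < 0`, the terms subtracted in `A` and `B` are negative, so `A`, `B`, `C` are
sums of positive terms, and a quadratic with positive coefficients is positive on `(0, ∞)`. -/

theorem quadratic_pos_of_coeff_pos {A B C a : ℝ} (hA : 0 < A) (hB : 0 < B) (hC : 0 < C)
    (ha : 0 < a) : 0 < A * a ^ 2 + B * a + C := by
  positivity

/-- The Routh–Hurwitz quadratic `P(a) = A a² + B a + C` for the
exponentially-fading-kernel model has `A, B, C > 0`, hence `P(a) > 0` for all
`a > 0`: the endemic equilibrium is locally asymptotically stable for every
`a > 0`. -/
theorem routh_hurwitz_exponential_kernel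
    (μ ν Ie βe βe' ge' : ℝ)
    (hμ : 0 < μ) (hν : 0 < ν)
    (hIe : Ie ∈ Set.Ioo (0:ℝ) 1)
    (hβe : 0 < βe) (hβe' : βe' < 0) (hge' : 0 < ge') :
    0 < μ + Ie * βe - Ie * (μ + ν) * ge' * βe' / βe ∧
    0 < (μ + Ie * βe) ^ 2 - Ie ^ 2 * (μ + ν) * ge' * βe' ∧
    0 < Ie ^ 2 * (μ + ν) * βe ^ 2 + Ie * μ * (μ + ν) * βe ∧
    ∀ a : ℝ, 0 < a →
      0 < (μ + Ie * βe - Ie * (μ + ν) * ge' * βe' / βe) * a ^ 2 +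
          ((μ + Ie * βe) ^ 2 - Ie ^ 2 * (μ + ν) * ge' * βe') * a +
          (Ie ^ 2 * (μ + ν) * βe ^ 2 + Ie * μ * (μ + ν) * βe) := by
  obtain ⟨hIe, -⟩ := hIe
  have hA : 0 < μ + Ie * βe - Ie * (μ + ν) * ge' * βe' / βe := by
    have hneg : Ie * (μ + ν) * ge' * βe' / βe < 0 :=
      div_neg_of_neg_of_pos (mul_neg_of_pos_of_neg (by positivity) hβe') hβe
    exact sub_pos.2 (hneg.trans (by positivity))
  have hB : 0 < (μ + Ie * βe) ^ 2 - Ie ^ 2 * (μ + ν) * ge' * βe' :=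
    sub_pos.2 ((mul_neg_of_pos_of_neg (by positivity) hβe').trans (by positivity))
  have hC : 0 < Ie ^ 2 * (μ + ν) * βe ^ 2 + Ie * μ * (μ + ν) * βe := by positivity
  exact ⟨hA, hB, hC, fun a ha => quadratic_pos_of_coeff_pos hA hB hC ha⟩
end

section
/- With g(I) = kI and β(M) = β₀/(1 + αM/I*), if R₀ = β₀/(μ+ν) > 1 then the endemic prevalence is explicitly I_e(α,k) = I_SIR · I* R₀ / (kαμ/(μ+ν) + I* R₀), where I_SIR = μ(1 − (μ+ν)/β₀)/(μ+ν); in particular this I_e solves μ(1 − (μ+ν)/β(kI_e)) − (μ+ν)I_e = 0, and 0 < I_e ≤ I_SIR with I_e strictly decreasing in α. -/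
/-! The equilibrium condition is linear in `I`, since the force of infection is damped by a factor
`1 + αkI/I*` that is affine in `I`; solving it gives `I_e(α) = I_SIR · c / (bα + c)` with
`b = kμ/(μ+ν) > 0` and `c = I* R₀ > 0`. Such a function of `α` is positive, equal to `I_SIR` at
`α = 0` and strictly decreasing on `[0, ∞)`, and `I_SIR > 0` is exactly `R₀ > 1`. -/

open Set

section Hyperbola

variable {A b c : ℝ}

lemma mul_div_add_le_self (hA : 0 ≤ A) (hc : 0 ≤ c) {t : ℝ} (ht : 0 ≤ t) :
    A * c / (t + c) ≤ A := by
  rw [mul_div_assoc]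
  exact mul_le_of_le_one_right hA (div_le_one_of_le₀ (by linarith) (by positivity))

lemma strictAntiOn_mul_div_mul_add (hA : 0 < A) (hb : 0 < b) (hc : 0 < c) :
    StrictAntiOn (fun x => A * c / (b * x + c)) (Ici 0) := by
  intro x hx y _ hxy
  have hx' : 0 < b * x + c := by have := mul_nonneg hb.le (mem_Ici.mp hx); linarith
  exact div_lt_div_of_pos_left (mul_pos hA hc) hx' (by nlinarith)

end Hyperbola

lemma equilibrium_residual_eq_zero {μ s β₀ k Istar α I : ℝ} (hs : s ≠ 0) (hβ₀ : β₀ ≠ 0)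
    (hIstar : Istar ≠ 0) (hD : k * α * μ + Istar * β₀ ≠ 0)
    (hI : I = μ * (1 - s / β₀) / s * (Istar * (β₀ / s)) / (k * α * μ / s + Istar * (β₀ / s))) :
    μ * (1 - s * (1 + α * k * I / Istar) / β₀) - s * I = 0 := by
  have hI' : s * I * (k * α * μ + Istar * β₀) = μ * (β₀ - s) * Istar := by
    rw [hI]
    field_simp
    exact mul_div_cancel_right₀ _ (by convert hD using 1; ring)
  field_simp
  linear_combination (-1 : ℝ) * hI'

theorem explicit_endemic_prevalence_general
    (μ ν β₀ k Istar : ℝ)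
    (hμ : 0 < μ) (hν : 0 < ν) (hk : 0 < k) (hIstar : 0 < Istar)
    (hR0 : 1 < β₀ / (μ + ν))
    (ISIR : ℝ) (hISIR : ISIR = μ * (1 - (μ + ν) / β₀) / (μ + ν))
    (Ie : ℝ → ℝ)
    (hIe : ∀ α, Ie α = ISIR * (Istar * (β₀ / (μ + ν))) /
        (k * α * μ / (μ + ν) + Istar * (β₀ / (μ + ν)))) :
    (∀ α, 0 ≤ α →
      μ * (1 - (μ + ν) * (1 + α * k * Ie α / Istar) / β₀) - (μ + ν) * Ie α = 0 ∧
      0 < Ie α ∧ Ie α ≤ ISIR) ∧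
    StrictAntiOn Ie (Set.Ici 0) := by
  have hs : 0 < μ + ν := by positivity
  have hβs : μ + ν < β₀ := (one_lt_div hs).mp hR0
  have hβ₀ : 0 < β₀ := hs.trans hβs
  have hISIR_pos : 0 < ISIR := by
    rw [hISIR]
    have : 0 < 1 - (μ + ν) / β₀ := sub_pos.mpr ((div_lt_one hβ₀).mpr hβs)
    positivity
  have hc : 0 < Istar * (β₀ / (μ + ν)) := by positivity
  have hb : 0 < k * μ / (μ + ν) := by positivity
  have hIe' : Ie = fun α => ISIR * (Istar * (β₀ / (μ + ν))) /
      (k * μ / (μ + ν) * α + Istar * (β₀ / (μ + ν))) := by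
    funext α
    rw [hIe]
    ring
  refine ⟨fun α hα => ⟨?_, ?_, ?_⟩, hIe' ▸ strictAntiOn_mul_div_mul_add hISIR_pos hb hc⟩
  · exact equilibrium_residual_eq_zero hs.ne' hβ₀.ne' hIstar.ne' (by positivity)
      (hISIR ▸ hIe α)
  · rw [hIe α]
    positivity
  · exact hIe α ▸ mul_div_add_le_self hISIR_pos.le hc.le (by positivity)

/-- with `g(I) = kI`, `β(M) = β₀/(1 + αM/I*)` and `R₀ > 1`, the
explicit endemic prevalence `I_e(α) = I_SIR · I*R₀/(kαμ/(μ+ν) + I*R₀)` solves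
the equilibrium equation, lies in `(0, I_SIR]`, and is strictly decreasing in
`α`. -/
theorem explicit_endemic_prevalence
    (μ ν β₀ k Istar : ℝ)
    (hμ : 0 < μ) (hν : 0 < ν) (hβ₀ : 0 < β₀) (hk : 0 < k) (hIstar : 0 < Istar)
    (hR0 : 1 < β₀ / (μ + ν))
    (ISIR : ℝ) (hISIR : ISIR = μ * (1 - (μ + ν) / β₀) / (μ + ν))
    (Ie : ℝ → ℝ)
    (hIe : ∀ α, Ie α = ISIR * (Istar * (β₀ / (μ + ν))) /
        (k * α * μ / (μ + ν) + Istar * (β₀ / (μ + ν)))) :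
    (∀ α, 0 ≤ α →
      μ * (1 - (μ + ν) * (1 + α * k * Ie α / Istar) / β₀) - (μ + ν) * Ie α = 0 ∧
      0 < Ie α ∧ Ie α ≤ ISIR) ∧
    StrictAntiOn Ie (Set.Ici 0) :=
  explicit_endemic_prevalence_general μ ν β₀ k Istar hμ hν hk hIstar hR0 ISIR hISIR Ie hIe
end

section
/- For the undelayed system S' = μ(1−S) − β(g(I))IS, I' = β(g(I))IS − (μ+ν)I with R₀ = β(0)/(μ+ν) > 1, the unique endemic equilibrium is globally asymptotically stable in the region {S > 0, I > 0, S + I ≤ 1}: it is locally asymptotically stable and, since Dulac's criterion rules out periodic orbits, every trajectory starting with I(0) > 0, S(0) > 0 converges to (S_e, I_e). -/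
/-!
Write `f = β ∘ g`, let `σ v = (μ + ν) / f v` be the `I`-nullcline and `u = S - σ(I)`. Then
`I' = f(I) I u` and `u' = h(I) - c(I) u`, where `h v = μ (1 - σ v) - (μ + ν) v` is strictly
decreasing with `h(I_e) = 0`, and `c ≥ μ` because `σ` is increasing. With `H' = -h / (f v · v)`
and `H(I_e) = 0`, the energy `E = u² / 2 + H(I)` satisfies `E' = -c(I) u² ≤ -μ u²`. Since `u'`
is bounded on the invariant triangle, `u → 0` and `H(I)` converges to some `L`. If `L > 0`, then
`I` eventually stays on one side of `I_e`, where the forcing `h(I)` keeps `u` away from `0`; so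
`L = 0`, whence `I → I_e` and `S = u + σ(I) → σ(I_e) = S_e`.
-/

open Filter Topology Set

theorem image_sub_le_mul_sub_of_hasDerivAt_le {f f' : ℝ → ℝ} {a b C : ℝ} (hab : a ≤ b)
    (hf : ∀ x ∈ Icc a b, HasDerivAt f (f' x) x) (hf' : ∀ x ∈ Icc a b, f' x ≤ C) :
    f b - f a ≤ C * (b - a) := by
  have hint : ∀ x ∈ interior (Icc a b), HasDerivAt f (f' x) x :=
    fun x hx => hf x (interior_subset hx)
  refine (convex_Icc a b).image_sub_le_mul_sub_of_deriv_le
    (fun x hx => (hf x hx).continuousAt.continuousWithinAt)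
    (fun x hx => (hint x hx).differentiableAt.differentiableWithinAt)
    (fun x hx => (hint x hx).deriv ▸ hf' x (interior_subset hx)) a (left_mem_Icc.2 hab) b
    (right_mem_Icc.2 hab) hab

theorem mul_sub_le_image_sub_of_le_hasDerivAt {f f' : ℝ → ℝ} {a b C : ℝ} (hab : a ≤ b)
    (hf : ∀ x ∈ Icc a b, HasDerivAt f (f' x) x) (hf' : ∀ x ∈ Icc a b, C ≤ f' x) :
    C * (b - a) ≤ f b - f a := by
  have := image_sub_le_mul_sub_of_hasDerivAt_le (f := fun x => -f x) (f' := fun x => -f' x)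
    (C := -C) hab (fun x hx => (hf x hx).neg) (fun x hx => neg_le_neg (hf' x hx))
  linarith

/-- Integrating factor: `x * exp (∫ q)` is nondecreasing. -/
theorem exists_pos_mul_le_of_hasDerivAt_sub_mul {x p q : ℝ → ℝ} (hq : ContinuousOn q (Ici 0))
    (hp : ∀ t, 0 ≤ t → 0 ≤ p t) (hx : ∀ t, 0 ≤ t → HasDerivAt x (p t - q t * x t) t)
    {t : ℝ} (ht : 0 ≤ t) : ∃ c > 0, c * x 0 ≤ x t := by
  set Q : ℝ → ℝ := fun s => ∫ r in (0 : ℝ)..s, q (max r 0)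
  have hQ : ∀ s, 0 ≤ s → HasDerivAt Q (q s) s := fun s hs => by
    have hcont : Continuous fun r => q (max r 0) :=
      hq.comp_continuous (continuous_id.max continuous_const) fun r => le_max_right r 0
    simpa [max_eq_left hs] using (hcont.integral_hasStrictDerivAt 0 s).hasDerivAt
  have hmono := mul_sub_le_image_sub_of_le_hasDerivAt (f := fun s => x s * Real.exp (Q s))
    (f' := fun s => p s * Real.exp (Q s)) (C := 0) ht
    (fun s hs => ((hx s hs.1).mul ((hQ s hs.1).exp)).congr_deriv (by ring))
    (fun s hs => mul_nonneg (hp s hs.1) (Real.exp_pos _).le)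
  refine ⟨Real.exp (-Q t), Real.exp_pos _, ?_⟩
  have hQ0 : Q 0 = 0 := intervalIntegral.integral_same
  simp only [hQ0, Real.exp_zero, mul_one, zero_mul, sub_nonneg] at hmono
  calc Real.exp (-Q t) * x 0 ≤ Real.exp (-Q t) * (x t * Real.exp (Q t)) :=
        mul_le_mul_of_nonneg_left hmono (Real.exp_pos _).le
    _ = x t := by rw [mul_comm, mul_assoc, ← Real.exp_add, add_neg_cancel, Real.exp_zero, mul_one]

theorem exists_tendsto_of_antitoneOn_Ici {E : ℝ → ℝ} {a b : ℝ} (hE : AntitoneOn E (Ici a))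
    (hb : ∀ t, a ≤ t → b ≤ E t) : ∃ L, Tendsto E atTop (𝓝 L) := by
  have hanti : Antitone fun t => E (max t a) := fun s t hst =>
    hE (le_max_right s a) (le_max_right t a) (max_le_max_right a hst)
  have hbdd : BddBelow (range fun t => E (max t a)) := ⟨b, by
    rintro _ ⟨t, rfl⟩; exact hb _ (le_max_right t a)⟩
  refine ⟨_, (tendsto_atTop_ciInf hanti hbdd).congr' ?_⟩
  filter_upwards [eventually_ge_atTop a] with t ht
  rw [max_eq_left ht]

theorem tendsto_atTop_of_eventually_le_deriv {u u' : ℝ → ℝ} {δ : ℝ} (hδ : 0 < δ)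
    (hu : ∀ᶠ t in atTop, HasDerivAt u (u' t) t ∧ δ ≤ u' t) : Tendsto u atTop atTop := by
  obtain ⟨T, hT⟩ := eventually_atTop.1 hu
  have hlin : Tendsto (fun t => u T + δ * (t - T)) atTop atTop :=
    tendsto_atTop_add_const_left _ _
      ((tendsto_atTop_add_const_right _ (-T) tendsto_id).const_mul_atTop hδ)
  refine tendsto_atTop_mono' _ ?_ hlin
  filter_upwards [eventually_ge_atTop T] with t ht
  have := mul_sub_le_image_sub_of_le_hasDerivAt ht (fun s hs => (hT s hs.1).1)
    (fun s hs => (hT s hs.1).2)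
  linarith

theorem not_eventually_le_of_hasDerivAt_sub_mul {u k c : ℝ → ℝ} {δ C : ℝ} (hδ : 0 < δ)
    (hu : ∀ᶠ t in atTop, HasDerivAt u (k t - c t * u t) t) (hc : ∀ᶠ t in atTop, |c t| ≤ C)
    (hu0 : Tendsto u atTop (𝓝 0)) : ¬ ∀ᶠ t in atTop, δ ≤ k t := by
  intro hk
  have hcu : Tendsto (fun t => u t * c t) atTop (𝓝 0) :=
    hu0.zero_mul_isBoundedUnder_le (isBoundedUnder_of_eventually_le hc)
  have hsmall : ∀ᶠ t in atTop, |u t * c t| < δ / 2 := by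
    have := hcu.abs
    rw [abs_zero] at this
    exact this.eventually (gt_mem_nhds (half_pos hδ))
  refine not_tendsto_nhds_of_tendsto_atTop
    (tendsto_atTop_of_eventually_le_deriv (u' := fun t => k t - c t * u t) (half_pos hδ) ?_) 0 hu0
  filter_upwards [hu, hk, hsmall] with t hut hkt hsmt
  refine ⟨hut, ?_⟩
  rw [mul_comm] at hsmt
  linarith [(abs_lt.1 hsmt).2]

/-- Barbalat-type argument: as `u` is Lipschitz, each late time with `|u| ≥ ε` is followed by an
interval on which `E` drops by a fixed amount, which its convergence forbids. -/
theorem tendsto_zero_of_hasDerivAt_le_neg_sq {u u' E E' : ℝ → ℝ} {K m L : ℝ} (hm : 0 < m)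
    (hu : ∀ t, 0 ≤ t → HasDerivAt u (u' t) t) (hu' : ∀ t, 0 ≤ t → |u' t| ≤ K)
    (hE : ∀ t, 0 ≤ t → HasDerivAt E (E' t) t) (hE' : ∀ t, 0 ≤ t → E' t ≤ -(m * u t ^ 2))
    (hEL : Tendsto E atTop (𝓝 L)) : Tendsto u atTop (𝓝 0) := by
  rw [Metric.tendsto_nhds]
  intro ε hε
  have hK : 0 ≤ K := (abs_nonneg _).trans (hu' 0 le_rfl)
  set Δ := ε / (2 * (K + 1))
  have hΔ : 0 < Δ := by positivity
  have hKΔ : K * Δ ≤ ε / 2 := by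
    rw [mul_div_assoc', div_le_div_iff₀ (by positivity) two_pos]; nlinarith
  have hclose : ∀ᶠ t in atTop, |E (t + Δ) - E t| < m * (ε / 2) ^ 2 * Δ := by
    have := (hEL.comp (tendsto_atTop_add_const_right _ Δ tendsto_id)).sub hEL
    have := this.abs
    rw [sub_self, abs_zero] at this
    exact this.eventually (gt_mem_nhds (by positivity))
  filter_upwards [hclose, eventually_ge_atTop 0] with t hEt ht
  rw [Real.dist_eq, sub_zero]
  by_contra! hut
  have hlip : ∀ s ∈ Icc t (t + Δ), ‖u s - u t‖ ≤ K * (s - t) :=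
    norm_image_sub_le_of_norm_deriv_le_segment'
      (fun s hs => (hu s (ht.trans hs.1)).hasDerivWithinAt)
      (fun s hs => hu' s (ht.trans hs.1))
  have hfar : ∀ s ∈ Icc t (t + Δ), E' s ≤ -(m * (ε / 2) ^ 2) := fun s hs => by
    have h1 : K * (s - t) ≤ ε / 2 :=
      (mul_le_mul_of_nonneg_left (by linarith [hs.2]) hK).trans hKΔ
    have h2 : ε / 2 ≤ |u s| := by
      have := abs_sub_abs_le_abs_sub (u t) (u s)
      rw [abs_sub_comm] at this
      linarith [hlip s hs, Real.norm_eq_abs (u s - u t)]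
    have h3 : (ε / 2) ^ 2 ≤ u s ^ 2 := by
      rw [← sq_abs (u s)]; exact pow_le_pow_left₀ (by positivity) h2 2
    linarith [hE' s (ht.trans hs.1), mul_le_mul_of_nonneg_left h3 hm.le]
  have hdrop := image_sub_le_mul_sub_of_hasDerivAt_le (by linarith)
    (fun s hs => hE s (ht.trans hs.1)) hfar
  rw [add_sub_cancel_left] at hdrop
  linarith [(abs_lt.1 hEt).1]

theorem eventually_lt_or_eventually_gt_of_continuousAt {x : ℝ → ℝ} {c : ℝ}
    (hx : ∀ᶠ t in atTop, ContinuousAt x t ∧ x t ≠ c) :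
    (∀ᶠ t in atTop, x t < c) ∨ ∀ᶠ t in atTop, c < x t := by
  obtain ⟨T, hT⟩ := eventually_atTop.1 hx
  have himage : IsPreconnected (x '' Ici T) :=
    isPreconnected_Ici.image x fun t ht => (hT t ht).1.continuousWithinAt
  have hc : c ∉ x '' Ici T := fun ⟨t, ht, hxt⟩ => (hT t ht).2 hxt
  have hmem : ∀ t, T ≤ t → x t ∈ x '' Ici T := fun t ht => mem_image_of_mem x ht
  rcases (hT T le_rfl).2.lt_or_gt with hlt | hgt
  · refine .inl (eventually_atTop.2 ⟨T, fun t ht => not_le.1 fun hle => hc ?_⟩)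
    exact himage.Icc_subset (hmem T le_rfl) (hmem t ht) ⟨hlt.le, hle⟩
  · refine .inr (eventually_atTop.2 ⟨T, fun t ht => not_le.1 fun hle => hc ?_⟩)
    exact himage.Icc_subset (hmem t ht) (hmem T le_rfl) ⟨hle, hgt.le⟩

theorem tendsto_of_tendsto_comp_of_strictAntiOn_of_strictMonoOn {H x : ℝ → ℝ} {a b : ℝ}
    (hba : b < a) (hanti : StrictAntiOn H (Ioc b a)) (hmono : StrictMonoOn H (Ici a))
    (hx : ∀ᶠ t in atTop, b < x t) (hH : Tendsto (fun t => H (x t)) atTop (𝓝 (H a))) :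
    Tendsto x atTop (𝓝 a) := by
  refine tendsto_order.2 ⟨fun c hc => ?_, fun c hc => ?_⟩
  · set c' := max c ((b + a) / 2)
    have hc' : c' ∈ Ioc b a := ⟨lt_max_of_lt_right (by linarith), max_le hc.le (by linarith)⟩
    have hc'a : c' < a := max_lt hc (by linarith)
    filter_upwards [hx, hH.eventually (gt_mem_nhds (hanti hc' ⟨hba, le_rfl⟩ hc'a))]
      with t hbt hHt
    refine (le_max_left c _).trans_lt (not_le.1 fun (hle : x t ≤ c') => hHt.not_ge ?_)
    exact hanti.antitoneOn ⟨hbt, hle.trans hc'.2⟩ hc' hle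
  · filter_upwards [hH.eventually (gt_mem_nhds (hmono self_mem_Ici hc.le hc))] with t hHt
    refine not_le.1 fun hle => hHt.not_ge ?_
    exact hmono.monotoneOn (mem_Ici.2 hc.le) (mem_Ici.2 (hc.le.trans hle)) hle

noncomputable def nullcline (μ ν : ℝ) (f : ℝ → ℝ) (v : ℝ) : ℝ := (μ + ν) / f v

noncomputable def nullclineDrift (μ ν : ℝ) (f : ℝ → ℝ) (v : ℝ) : ℝ :=
  μ * (1 - nullcline μ ν f v) - (μ + ν) * v

noncomputable def damping (μ ν : ℝ) (f : ℝ → ℝ) (v : ℝ) : ℝ :=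
  μ + f v * v * (1 + deriv (nullcline μ ν f) v)

noncomputable def potential (μ ν : ℝ) (f : ℝ → ℝ) (a v : ℝ) : ℝ :=
  ∫ s in a..v, -nullclineDrift μ ν f s / (f s * s)

structure IsSIRSolution (μ ν : ℝ) (f S I : ℝ → ℝ) : Prop where
  hasDerivAt_S : ∀ t, 0 ≤ t → HasDerivAt S (μ * (1 - S t) - f (I t) * I t * S t) t
  hasDerivAt_I : ∀ t, 0 ≤ t → HasDerivAt I (f (I t) * I t * S t - (μ + ν) * I t) t

variable {μ ν a : ℝ} {f S I : ℝ → ℝ}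

theorem mul_nullcline (hfpos : ∀ v, 0 < f v) (v : ℝ) : f v * nullcline μ ν f v = μ + ν :=
  mul_div_cancel₀ _ (hfpos v).ne'

theorem contDiff_nullcline (hf : ContDiff ℝ 1 f) (hfpos : ∀ v, 0 < f v) :
    ContDiff ℝ 1 (nullcline μ ν f) :=
  contDiff_const.div hf fun v => (hfpos v).ne'

theorem monotone_nullcline (hμν : 0 ≤ μ + ν) (hfpos : ∀ v, 0 < f v) (hfanti : Antitone f) :
    Monotone (nullcline μ ν f) := fun _ y hxy =>
  div_le_div_of_nonneg_left hμν (hfpos y) (hfanti hxy)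

theorem continuous_nullclineDrift (hf : Continuous f) (hfpos : ∀ v, 0 < f v) :
    Continuous (nullclineDrift μ ν f) :=
  (continuous_const.mul (continuous_const.sub
    (continuous_const.div hf fun v => (hfpos v).ne'))).sub (continuous_const.mul continuous_id)

theorem strictAnti_nullclineDrift (hμ : 0 ≤ μ) (hμν : 0 < μ + ν) (hfpos : ∀ v, 0 < f v)
    (hfanti : Antitone f) : StrictAnti (nullclineDrift μ ν f) := fun x y hxy => by
  have := mul_le_mul_of_nonneg_left (monotone_nullcline hμν.le hfpos hfanti hxy.le) hμ
  have := mul_lt_mul_of_pos_left hxy hμν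
  simp only [nullclineDrift]
  linarith

theorem continuous_damping (hf : ContDiff ℝ 1 f) (hfpos : ∀ v, 0 < f v) :
    Continuous (damping μ ν f) := by
  have := (contDiff_nullcline (μ := μ) (ν := ν) hf hfpos).continuous_deriv le_rfl
  have := hf.continuous
  unfold damping
  fun_prop

theorem le_damping (hμν : 0 ≤ μ + ν) (hfpos : ∀ v, 0 < f v) (hfanti : Antitone f) {v : ℝ}
    (hv : 0 ≤ v) : μ ≤ damping μ ν f v := by
  have := (monotone_nullcline hμν hfpos hfanti).deriv_nonneg (x := v)
  exact le_add_of_nonneg_right (mul_nonneg (mul_nonneg (hfpos v).le hv) (by linarith))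

theorem hasDerivAt_potential (hf : Continuous f) (hfpos : ∀ v, 0 < f v) (ha : 0 < a) {v : ℝ}
    (hv : 0 < v) :
    HasDerivAt (potential μ ν f a) (-nullclineDrift μ ν f v / (f v * v)) v := by
  have hcont : ContinuousOn (fun s => -nullclineDrift μ ν f s / (f s * s)) (Ioi 0) :=
    ((continuous_nullclineDrift hf hfpos).neg.continuousOn).div
      (hf.mul continuous_id).continuousOn fun s hs => (mul_pos (hfpos s) hs).ne'
  have hsub : uIcc a v ⊆ Ioi 0 := fun s hs => lt_of_lt_of_le (lt_min ha hv) hs.1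
  exact intervalIntegral.integral_hasDerivAt_right (hcont.mono hsub).intervalIntegrable
    (hcont.stronglyMeasurableAtFilter isOpen_Ioi v hv)
    (hcont.continuousAt (isOpen_Ioi.mem_nhds hv))

@[simp]
theorem potential_self : potential μ ν f a a = 0 := intervalIntegral.integral_same

theorem strictAntiOn_potential (hf : Continuous f) (hfpos : ∀ v, 0 < f v)
    (hdrift : StrictAnti (nullclineDrift μ ν f)) (ha : 0 < a) (hda : nullclineDrift μ ν f a = 0) :
    StrictAntiOn (potential μ ν f a) (Ioc 0 a) := by
  refine strictAntiOn_of_hasDerivWithinAt_neg (f' := fun v => -nullclineDrift μ ν f v / (f v * v))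
    (convex_Ioc 0 a)
    (fun v hv => (hasDerivAt_potential hf hfpos ha hv.1).continuousAt.continuousWithinAt) ?_ ?_ <;>
    simp only [interior_Ioc]
  · exact fun v hv => (hasDerivAt_potential hf hfpos ha hv.1).hasDerivWithinAt
  · exact fun v hv => div_neg_of_neg_of_pos (neg_neg_of_pos (hda ▸ hdrift hv.2))
      (mul_pos (hfpos v) hv.1)

theorem strictMonoOn_potential (hf : Continuous f) (hfpos : ∀ v, 0 < f v)
    (hdrift : StrictAnti (nullclineDrift μ ν f)) (ha : 0 < a) (hda : nullclineDrift μ ν f a = 0) :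
    StrictMonoOn (potential μ ν f a) (Ici a) := by
  refine strictMonoOn_of_hasDerivWithinAt_pos (f' := fun v => -nullclineDrift μ ν f v / (f v * v))
    (convex_Ici a)
    (fun v hv =>
      (hasDerivAt_potential hf hfpos ha (ha.trans_le hv)).continuousAt.continuousWithinAt) ?_ ?_ <;>
    simp only [interior_Ici]
  · exact fun v hv => (hasDerivAt_potential hf hfpos ha (ha.trans hv)).hasDerivWithinAt
  · exact fun v hv => div_pos (neg_pos_of_neg (hda ▸ hdrift hv))
      (mul_pos (hfpos v) (ha.trans hv))

theorem potential_nonneg (hf : Continuous f) (hfpos : ∀ v, 0 < f v)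
    (hdrift : StrictAnti (nullclineDrift μ ν f)) (ha : 0 < a) (hda : nullclineDrift μ ν f a = 0)
    {v : ℝ} (hv : 0 < v) : 0 ≤ potential μ ν f a v := by
  rcases le_total v a with hva | hav
  · simpa using (strictAntiOn_potential hf hfpos hdrift ha hda).antitoneOn ⟨hv, hva⟩
      ⟨ha, le_rfl⟩ hva
  · simpa using (strictMonoOn_potential hf hfpos hdrift ha hda).monotoneOn self_mem_Ici hav hav

namespace IsSIRSolution

variable (hsol : IsSIRSolution μ ν f S I)
include hsol

theorem continuousAt_S {t : ℝ} (ht : 0 ≤ t) : ContinuousAt S t :=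
  (hsol.hasDerivAt_S t ht).continuousAt

theorem continuousAt_I {t : ℝ} (ht : 0 ≤ t) : ContinuousAt I t :=
  (hsol.hasDerivAt_I t ht).continuousAt

/-- Each of `I`, `S` and `1 - S - I` solves a linear equation `x' = p - q x` with `p ≥ 0`. -/
theorem mem_triangle (hμ : 0 ≤ μ) (hν : 0 ≤ ν) (hf : Continuous f) (hS0 : 0 < S 0)
    (hI0 : 0 < I 0) (hSI0 : S 0 + I 0 ≤ 1) {t : ℝ} (ht : 0 ≤ t) :
    0 < S t ∧ 0 < I t ∧ S t + I t ≤ 1 := by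
  have hcont : ∀ s, 0 ≤ s → ContinuousAt S s ∧ ContinuousAt I s := fun s hs =>
    ⟨hsol.continuousAt_S hs, hsol.continuousAt_I hs⟩
  have hIpos : ∀ s, 0 ≤ s → 0 < I s := fun s hs => by
    obtain ⟨c, hc, hle⟩ := exists_pos_mul_le_of_hasDerivAt_sub_mul
      (p := fun _ => 0) (q := fun s => μ + ν - f (I s) * S s)
      (fun s hs => by
        obtain ⟨_, _⟩ := hcont s hs
        exact ContinuousAt.continuousWithinAt (by fun_prop)) (fun _ _ => le_rfl)
      (fun s hs => (hsol.hasDerivAt_I s hs).congr_deriv (by ring)) hs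
    exact (mul_pos hc hI0).trans_le hle
  refine ⟨?_, hIpos t ht, ?_⟩
  · obtain ⟨c, hc, hle⟩ := exists_pos_mul_le_of_hasDerivAt_sub_mul
      (p := fun _ => μ) (q := fun s => μ + f (I s) * I s)
      (fun s hs => by
        obtain ⟨_, _⟩ := hcont s hs
        exact ContinuousAt.continuousWithinAt (by fun_prop)) (fun _ _ => hμ)
      (fun s hs => (hsol.hasDerivAt_S s hs).congr_deriv (by ring)) ht
    exact (mul_pos hc hS0).trans_le hle
  · obtain ⟨c, hc, hle⟩ := exists_pos_mul_le_of_hasDerivAt_sub_mul (x := fun s => 1 - S s - I s)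
      (p := fun s => ν * I s) (q := fun _ => μ) continuousOn_const
      (fun s hs => mul_nonneg hν (hIpos s hs).le)
      (fun s hs => (((hsol.hasDerivAt_S s hs).const_sub 1).sub
        (hsol.hasDerivAt_I s hs)).congr_deriv (by ring)) ht
    nlinarith

theorem hasDerivAt_I_eq_mul_sub_nullcline (hfpos : ∀ v, 0 < f v) {t : ℝ} (ht : 0 ≤ t) :
    HasDerivAt I (f (I t) * I t * (S t - nullcline μ ν f (I t))) t :=
  (hsol.hasDerivAt_I t ht).congr_deriv
    (by linear_combination I t * mul_nullcline (μ := μ) (ν := ν) hfpos (I t))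

theorem hasDerivAt_sub_nullcline (hf : ContDiff ℝ 1 f) (hfpos : ∀ v, 0 < f v) {t : ℝ}
    (ht : 0 ≤ t) :
    HasDerivAt (fun t => S t - nullcline μ ν f (I t))
      (nullclineDrift μ ν f (I t) -
        damping μ ν f (I t) * (S t - nullcline μ ν f (I t))) t := by
  have hσ := ((contDiff_nullcline (μ := μ) (ν := ν) hf hfpos).differentiable
    one_ne_zero (I t)).hasDerivAt
  refine ((hsol.hasDerivAt_S t ht).sub (hσ.comp t (hsol.hasDerivAt_I t ht))).congr_deriv ?_
  simp only [nullclineDrift, damping]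
  linear_combination (-(I t) * (1 + deriv (nullcline μ ν f) (I t))) *
    mul_nullcline (μ := μ) (ν := ν) hfpos (I t)

theorem hasDerivAt_lyapunov (hf : ContDiff ℝ 1 f) (hfpos : ∀ v, 0 < f v) (ha : 0 < a) {t : ℝ}
    (ht : 0 ≤ t) (hIt : 0 < I t) :
    HasDerivAt (fun t => (S t - nullcline μ ν f (I t)) ^ 2 / 2 + potential μ ν f a (I t))
      (-(damping μ ν f (I t) * (S t - nullcline μ ν f (I t)) ^ 2)) t := by
  have hH := (hasDerivAt_potential (μ := μ) (ν := ν) hf.continuous hfpos ha hIt).comp t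
    (hsol.hasDerivAt_I_eq_mul_sub_nullcline hfpos ht)
  refine ((((hsol.hasDerivAt_sub_nullcline hf hfpos ht).pow 2).div_const 2).add hH).congr_deriv ?_
  have := (hfpos (I t)).ne'
  field_simp
  ring

section Convergence

variable (hμ : 0 < μ) (hν : 0 < ν) (hf : ContDiff ℝ 1 f) (hfpos : ∀ v, 0 < f v)
  (hfanti : Antitone f) (hS0 : 0 < S 0) (hI0 : 0 < I 0) (hSI0 : S 0 + I 0 ≤ 1) (ha : 0 < a)
  (hda : nullclineDrift μ ν f a = 0)
include hμ hν hf hfpos hfanti hS0 hI0 hSI0 ha hda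

theorem tendsto_sub_nullcline_and_potential :
    Tendsto (fun t => S t - nullcline μ ν f (I t)) atTop (𝓝 0) ∧
      ∃ L, Tendsto (fun t => potential μ ν f a (I t)) atTop (𝓝 L) := by
  set u := fun t => S t - nullcline μ ν f (I t)
  have hmem := fun t (ht : 0 ≤ t) => hsol.mem_triangle hμ.le hν.le hf.continuous hS0 hI0 hSI0 ht
  have hdrift := strictAnti_nullclineDrift hμ.le (by linarith : 0 < μ + ν) hfpos hfanti
  set E := fun t => u t ^ 2 / 2 + potential μ ν f a (I t)
  have hE : ∀ t, 0 ≤ t → HasDerivAt E (-(damping μ ν f (I t) * u t ^ 2)) t := fun t ht =>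
    hsol.hasDerivAt_lyapunov hf hfpos ha ht (hmem t ht).2.1
  have hE' : ∀ t, 0 ≤ t → -(damping μ ν f (I t) * u t ^ 2) ≤ -(μ * u t ^ 2) := fun t ht =>
    neg_le_neg (mul_le_mul_of_nonneg_right
      (le_damping (by linarith) hfpos hfanti (hmem t ht).2.1.le) (sq_nonneg _))
  obtain ⟨L, hEL⟩ := exists_tendsto_of_antitoneOn_Ici (E := E) (a := 0) (b := 0)
    (fun s hs t ht hst => by
      have := image_sub_le_mul_sub_of_hasDerivAt_le (C := 0) hst (fun x hx => hE x (hs.trans hx.1))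
        (fun x hx => (hE' x (hs.trans hx.1)).trans (neg_nonpos.2 (by positivity)))
      linarith)
    (fun t ht => add_nonneg (by positivity)
      (potential_nonneg hf.continuous hfpos hdrift ha hda (hmem t ht).2.1))
  have hcont : Continuous fun p : ℝ × ℝ =>
      nullclineDrift μ ν f p.2 - damping μ ν f p.2 * (p.1 - nullcline μ ν f p.2) := by
    have := continuous_nullclineDrift (μ := μ) (ν := ν) hf.continuous hfpos
    have := continuous_damping (μ := μ) (ν := ν) hf hfpos
    have := (contDiff_nullcline (μ := μ) (ν := ν) hf hfpos).continuous
    fun_prop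
  obtain ⟨K, hK⟩ := (isCompact_Icc.prod isCompact_Icc).exists_bound_of_continuousOn
    (s := Icc (0 : ℝ) 1 ×ˢ Icc (0 : ℝ) 1) hcont.continuousOn
  have hu0 := tendsto_zero_of_hasDerivAt_le_neg_sq hμ
    (fun t ht => hsol.hasDerivAt_sub_nullcline hf hfpos ht)
    (fun t ht => by
      obtain ⟨hSt, hIt, hSIt⟩ := hmem t ht
      exact hK (S t, I t) ⟨⟨hSt.le, by linarith⟩, ⟨hIt.le, by linarith⟩⟩) hE hE' hEL
  refine ⟨hu0, L, ?_⟩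
  simpa [E, u] using hEL.sub ((hu0.pow 2).div_const 2)

/-- If the potential along `I` had a positive limit, `I` would eventually stay on one side of `a`,
where the drift pushes `S - σ(I)` away from `0`. -/
theorem potential_limit_eq_zero {L : ℝ}
    (hu0 : Tendsto (fun t => S t - nullcline μ ν f (I t)) atTop (𝓝 0))
    (hL : Tendsto (fun t => potential μ ν f a (I t)) atTop (𝓝 L)) : L = 0 := by
  have hmem := fun t (ht : 0 ≤ t) => hsol.mem_triangle hμ.le hν.le hf.continuous hS0 hI0 hSI0 ht
  have hdrift := strictAnti_nullclineDrift hμ.le (by linarith : 0 < μ + ν) hfpos hfanti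
  have hL0 : 0 ≤ L := ge_of_tendsto hL (eventually_atTop.2
    ⟨0, fun t ht => potential_nonneg hf.continuous hfpos hdrift ha hda (hmem t ht).2.1⟩)
  refine le_antisymm (not_lt.1 fun hLpos => ?_) hL0
  obtain ⟨r, hr, hball⟩ := Metric.eventually_nhds_iff.1
    (((hasDerivAt_potential (μ := μ) (ν := ν) hf.continuous hfpos ha ha).continuousAt.tendsto
      ).eventually (gt_mem_nhds (show potential μ ν f a a < L / 2 by simpa using hLpos)))
  have hfar : ∀ᶠ t in atTop, r ≤ |I t - a| :=
    (hL.eventually (lt_mem_nhds (half_lt_self hLpos))).mono fun t ht =>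
      not_lt.1 fun h => (hball (by rwa [Real.dist_eq])).not_gt ht
  obtain ⟨C, hC⟩ := isCompact_Icc.exists_bound_of_continuousOn
    (continuous_damping (μ := μ) (ν := ν) hf hfpos).continuousOn (s := Icc 0 1)
  have hc : ∀ᶠ t in atTop, |damping μ ν f (I t)| ≤ C := eventually_atTop.2 ⟨0, fun t ht =>
    hC _ ⟨(hmem t ht).2.1.le, by linarith [hmem t ht]⟩⟩
  have hu := eventually_atTop.2 ⟨0, fun t ht => hsol.hasDerivAt_sub_nullcline hf hfpos ht⟩
  have hside := eventually_lt_or_eventually_gt_of_continuousAt (x := I) (c := a) (by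
    filter_upwards [hfar, eventually_ge_atTop 0] with t hrt ht
    refine ⟨hsol.continuousAt_I ht, fun h => ?_⟩
    rw [h, sub_self, abs_zero] at hrt
    linarith)
  rcases hside with hbelow | habove
  · refine not_eventually_le_of_hasDerivAt_sub_mul (hda ▸ hdrift (by linarith : a - r < a)) hu
      hc hu0 ?_
    filter_upwards [hbelow, hfar] with t hlt hrt
    rw [abs_of_neg (sub_neg.2 hlt)] at hrt
    exact hdrift.antitone (by linarith)
  · refine not_eventually_le_of_hasDerivAt_sub_mul (u := fun t => -(S t - nullcline μ ν f (I t)))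
      (k := fun t => -nullclineDrift μ ν f (I t))
      (neg_pos.2 (hda ▸ hdrift (by linarith : a < a + r))) (hu.mono fun t h =>
        h.neg.congr_deriv (by ring)) hc (by simpa using hu0.neg) ?_
    filter_upwards [habove, hfar] with t hgt hrt
    rw [abs_of_pos (sub_pos.2 hgt)] at hrt
    exact neg_le_neg (hdrift.antitone (by linarith))

theorem tendsto_endemic :
    Tendsto S atTop (𝓝 (nullcline μ ν f a)) ∧ Tendsto I atTop (𝓝 a) := by
  obtain ⟨hu0, L, hL⟩ := hsol.tendsto_sub_nullcline_and_potential hμ hν hf hfpos hfanti hS0 hI0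
    hSI0 ha hda
  have hL0 := hsol.potential_limit_eq_zero hμ hν hf hfpos hfanti hS0 hI0 hSI0 ha hda hu0 hL
  have hdrift := strictAnti_nullclineDrift hμ.le (by linarith : 0 < μ + ν) hfpos hfanti
  have hI : Tendsto I atTop (𝓝 a) := tendsto_of_tendsto_comp_of_strictAntiOn_of_strictMonoOn ha
    (strictAntiOn_potential hf.continuous hfpos hdrift ha hda)
    (strictMonoOn_potential hf.continuous hfpos hdrift ha hda)
    (eventually_atTop.2 ⟨0, fun t ht =>
      (hsol.mem_triangle hμ.le hν.le hf.continuous hS0 hI0 hSI0 ht).2.1⟩)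
    (by rwa [potential_self, ← hL0])
  refine ⟨?_, hI⟩
  have hσ := (contDiff_nullcline (μ := μ) (ν := ν) hf hfpos).continuous.tendsto a
  simpa using hu0.add (hσ.comp hI)

end Convergence

end IsSIRSolution

theorem undelayed_endemic_GAS_general
    (μ ν : ℝ) (hμ : 0 < μ) (hν : 0 < ν)
    (β g : ℝ → ℝ)
    (hβC1 : ContDiff ℝ 1 β) (hgC1 : ContDiff ℝ 1 g)
    (hβpos : ∀ m, 0 < β m) (hβ' : ∀ m, deriv β m < 0)
    (hg' : ∀ i, 0 < deriv g i)
    (Se Ie : ℝ) (hIe : Ie ∈ Set.Ioo (0:ℝ) 1)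
    (hSe : Se = (μ + ν) / β (g Ie))
    (heq : μ * (1 - (μ + ν) / β (g Ie)) - (μ + ν) * Ie = 0)
    (S I : ℝ → ℝ)
    (hS : ∀ t, 0 ≤ t → HasDerivAt S (μ * (1 - S t) - β (g (I t)) * I t * S t) t)
    (hI : ∀ t, 0 ≤ t → HasDerivAt I (β (g (I t)) * I t * S t - (μ + ν) * I t) t)
    (hS0 : 0 < S 0) (hI0 : 0 < I 0) (hSI0 : S 0 + I 0 ≤ 1) :
    Tendsto S atTop (𝓝 Se) ∧ Tendsto I atTop (𝓝 Ie) := by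
  have hsol : IsSIRSolution μ ν (fun v => β (g v)) S I := ⟨hS, hI⟩
  have hfanti : Antitone fun v => β (g v) :=
    ((strictAnti_of_deriv_neg hβ').comp_strictMono (strictMono_of_deriv_pos hg')).antitone
  subst hSe
  exact hsol.tendsto_endemic hμ hν (hβC1.comp hgC1) (fun v => hβpos (g v)) hfanti hS0 hI0 hSI0
    hIe.1 heq

/-- for the undelayed system with `R₀ > 1`, the unique endemic
equilibrium `(S_e, I_e)` is globally asymptotically stable in
`{S > 0, I > 0, S + I ≤ 1}`: every such trajectory converges to it. -/
theorem undelayed_endemic_GAS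
    (μ ν : ℝ) (hμ : 0 < μ) (hν : 0 < ν)
    (β g : ℝ → ℝ)
    (hβC1 : ContDiff ℝ 1 β) (hgC1 : ContDiff ℝ 1 g)
    (hβpos : ∀ m, 0 < β m) (hβ' : ∀ m, deriv β m < 0)
    (hg0 : g 0 = 0) (hg' : ∀ i, 0 < deriv g i)
    (hR0 : 1 < β 0 / (μ + ν))
    (Se Ie : ℝ) (hIe : Ie ∈ Set.Ioo (0:ℝ) 1)
    (hSe : Se = (μ + ν) / β (g Ie))
    (heq : μ * (1 - (μ + ν) / β (g Ie)) - (μ + ν) * Ie = 0)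
    (S I : ℝ → ℝ)
    (hS : ∀ t, 0 ≤ t → HasDerivAt S (μ * (1 - S t) - β (g (I t)) * I t * S t) t)
    (hI : ∀ t, 0 ≤ t → HasDerivAt I (β (g (I t)) * I t * S t - (μ + ν) * I t) t)
    (hS0 : 0 < S 0) (hI0 : 0 < I 0) (hSI0 : S 0 + I 0 ≤ 1) :
    Tendsto S atTop (𝓝 Se) ∧ Tendsto I atTop (𝓝 Ie) :=
  undelayed_endemic_GAS_general μ ν hμ hν β g hβC1 hgC1 hβpos hβ' hg' Se Ie hIe hSe heq S I hS hI
    hS0 hI0 hSI0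
end
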